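/- arXiv:2308.14526 — 4 statements merged into one kernel-verified Lean document; each statement's English description precedes it below -/
import Mathlib

section
/- Let 1 ≤ k ≤ n-1 and let T : Mat_n(F) → Mat_n(F) be a linear map satisfying T(Λ^{≤k}) = Λ^{≤k}. Then T is bijective. -/
open Matrix

/-- The permanental rank of a square matrix: the size of the largest square
submatrix with nonzero permanent. -/
noncomputable def prk {n : ℕ} {F : Type*} [Field F] (A : Matrix (Fin n) (Fin n) F) : ℕ :=
  sSup {k | ∃ r c : Fin k → Fin n, Function.Injective r ∧ Function.Injective c ∧
    (A.submatrix r c).permanent ≠ 0}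

/-- The permutation matrix of `σ`: its `(i,j)` entry is `1` if `j = σ⁻¹ i` and `0` otherwise. -/
def permMat {n : ℕ} (F : Type*) [Field F] (σ : Equiv.Perm (Fin n)) :
    Matrix (Fin n) (Fin n) F :=
  Matrix.of fun i j => if j = σ⁻¹ i then (1 : F) else 0

lemma prk_stdBasis_le_one {n : ℕ} {F : Type*} [Field F] (i j : Fin n) (c : F) :
    prk (Matrix.single i j c) ≤ 1 := by
  apply csSup_le'
  rintro m ⟨r, s, hr, hs, hne⟩
  by_contra h
  push_neg at h
  apply hne
  apply Finset.sum_eq_zero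
  intro σ _
  have h2 : 1 < m := h
  set b1 : Fin m := ⟨0, by omega⟩
  set b2 : Fin m := ⟨1, by omega⟩
  have hb12 : b1 ≠ b2 := by simp [b1, b2, Fin.ext_iff]
  have key : r (σ b1) ≠ i ∨ r (σ b2) ≠ i := by
    by_contra hc
    push_neg at hc
    exact hb12 (σ.injective (hr (hc.1.trans hc.2.symm)))
  rcases key with hne1 | hne1
  · exact Finset.prod_eq_zero (Finset.mem_univ b1)
      (by simp [Matrix.single]; exact fun h _ => absurd h.symm hne1)
  · exact Finset.prod_eq_zero (Finset.mem_univ b2)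
      (by simp [Matrix.single]; exact fun h _ => absurd h.symm hne1)

theorem stmt_5 {n : ℕ} {F : Type*} [Field F] (hn : 3 ≤ n) (hchar : (2 : F) ≠ 0)
    (k : ℕ) (hk1 : 1 ≤ k) (hk2 : k ≤ n - 1)
    (T : Matrix (Fin n) (Fin n) F → Matrix (Fin n) (Fin n) F)
    (hlin : IsLinearMap F T)
    (hpres : T '' {A | prk A ≤ k} = {A | prk A ≤ k}) :
    Function.Bijective T := by
  set f := hlin.mk' T with hf
  have hTf : T = f := rfl
  have hsurj : Function.Surjective f := by
    rw [← LinearMap.range_eq_top, eq_top_iff]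
    intro A _
    rw [Matrix.matrix_eq_sum_single A]
    apply Submodule.sum_mem
    intro i _
    apply Submodule.sum_mem
    intro j _
    have hmem : Matrix.single i j (A i j) ∈ {B | prk B ≤ k} :=
      le_trans (prk_stdBasis_le_one i j (A i j)) hk1
    rw [← hpres] at hmem
    obtain ⟨B, _, hB⟩ := hmem
    exact ⟨B, hB⟩
  have hinj : Function.Injective f :=
    (LinearMap.injective_iff_surjective).mpr hsurj
  rw [hTf]
  exact ⟨hinj, hsurj⟩
end

section
/- Let F be an infinite field with char(F) ≠ 2 and let 1 ≤ k ≤ n. For every matrix A ∈ Mat_n(F) with prk(A) = k-1 and every polynomial f in the n² matrix entries with f(A) ≠ 0, there exists a matrix X ∈ Mat_n(F) such that prk(X) = k and f(X) ≠ 0. (Equivalently, Λ^k is Zariski dense in Λ^k ∪ Λ^{k-1}.) -/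
open Matrix

section Aux

variable {R : Type*} [CommRing R]

/-- the permutation `τ p` with `p.succAbove (τ p x) = swap 0 p x.succ`. -/
private def tauPerm {m : ℕ} (p : Fin (m + 1)) : Equiv.Perm (Fin m) :=
  Fin.cases 1 (fun i => i.cycleRange) p

private lemma succAbove_tauPerm {m : ℕ} (p : Fin (m + 1)) (x : Fin m) :
    p.succAbove (tauPerm p x) = Equiv.swap 0 p x.succ := by
  induction p using Fin.cases with
  | zero => simp [tauPerm]
  | succ i => simp [tauPerm, Fin.succAbove_cycleRange]

/-- Laplace-type expansion of the permanent along column `0`. -/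
theorem permanent_succ_column_zero {m : ℕ} (M : Matrix (Fin (m + 1)) (Fin (m + 1)) R) :
    M.permanent = ∑ p : Fin (m + 1), M p 0 * (M.submatrix p.succAbove Fin.succ).permanent := by
  rw [permanent, ← Equiv.sum_comp Equiv.Perm.decomposeFin.symm (fun σ => ∏ j, M (σ j) j),
    Fintype.sum_prod_type]
  refine Finset.sum_congr rfl fun p _ => ?_
  calc (∑ σ : Equiv.Perm (Fin m), ∏ j, M (Equiv.Perm.decomposeFin.symm (p, σ) j) j)
      = ∑ σ : Equiv.Perm (Fin m),
          M p 0 * ∏ x, M (p.succAbove ((tauPerm p * σ) x)) x.succ := by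
        refine Finset.sum_congr rfl fun σ _ => ?_
        rw [Fin.prod_univ_succ]
        simp only [Equiv.Perm.decomposeFin_symm_apply_zero,
          Equiv.Perm.decomposeFin_symm_apply_succ, Equiv.Perm.mul_apply, succAbove_tauPerm]
    _ = M p 0 * (M.submatrix p.succAbove Fin.succ).permanent := by
        have := Equiv.sum_comp (Equiv.mulLeft (tauPerm p))
          (fun σ : Equiv.Perm (Fin m) => M p 0 * ∏ x, M (p.succAbove (σ x)) x.succ)
        simp only [Equiv.coe_mulLeft] at this
        rw [this, permanent, Finset.mul_sum]
        rfl

/-- permanent invariance under row/col permutations. -/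
private lemma permanent_submatrix_perm {m : ℕ} (M : Matrix (Fin m) (Fin m) R)
    (σ τ : Equiv.Perm (Fin m)) : (M.submatrix σ τ).permanent = M.permanent := by
  have h : M.submatrix ⇑σ ⇑τ = (M.submatrix ⇑σ id).submatrix id ⇑τ := by
    rw [submatrix_submatrix]; rfl
  rw [h, permanent_permute_rows, permanent_permute_cols]

/-- perturbing the (0,0) entry changes the permanent affinely. -/
private lemma permanent_perturb {s : ℕ} (N : Matrix (Fin (s + 1)) (Fin (s + 1)) R) (t : R) :
    (Matrix.of fun a b => N a b + if a = 0 ∧ b = 0 then t else 0).permanent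
      = N.permanent + t * (N.submatrix Fin.succ Fin.succ).permanent := by
  set M := Matrix.of fun a b => N a b + if a = 0 ∧ b = 0 then t else 0 with hM
  have hsub : ∀ p : Fin (s + 1),
      M.submatrix p.succAbove Fin.succ = N.submatrix p.succAbove Fin.succ := by
    intro p; ext a b
    simp [hM, (Fin.succ_ne_zero b)]
  rw [permanent_succ_column_zero, permanent_succ_column_zero N]
  simp_rw [hsub]
  have hcol : ∀ p : Fin (s + 1), M p 0 = N p 0 + if p = 0 then t else 0 := by
    intro p; simp [hM]
  simp_rw [hcol, add_mul, Finset.sum_add_distrib, ite_mul, zero_mul,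
    Finset.sum_ite_eq' Finset.univ (0 : Fin (s+1))]
  simp [Fin.succAbove_zero]

variable {n : ℕ} {F : Type*} [Field F]

private def prkSet (X : Matrix (Fin n) (Fin n) F) : Set ℕ :=
  {k | ∃ r c : Fin k → Fin n, Function.Injective r ∧ Function.Injective c ∧
    (X.submatrix r c).permanent ≠ 0}

private lemma zero_mem_prkSet (X : Matrix (Fin n) (Fin n) F) : 0 ∈ prkSet X :=
  ⟨Fin.elim0, Fin.elim0, fun x => x.elim0, fun x => x.elim0, by
    rw [Matrix.permanent_isEmpty]; exact one_ne_zero⟩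

private lemma bddAbove_prkSet (X : Matrix (Fin n) (Fin n) F) : BddAbove (prkSet X) :=
  ⟨n, fun _ h => by obtain ⟨r, _, hr, _, _⟩ := h; simpa using Fintype.card_le_of_injective r hr⟩

private lemma prkSet_down {X : Matrix (Fin n) (Fin n) F} {s : ℕ} (h : s + 1 ∈ prkSet X) :
    s ∈ prkSet X := by
  obtain ⟨r, c, hr, hc, hp⟩ := h
  rw [permanent_succ_column_zero] at hp
  obtain ⟨p, -, hp⟩ := Finset.exists_ne_zero_of_sum_ne_zero hp
  refine ⟨r ∘ p.succAbove, c ∘ Fin.succ, hr.comp (Fin.succAbove_right_injective),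
    hc.comp (Fin.succ_injective _), ?_⟩
  intro h0
  rw [Matrix.submatrix_submatrix] at hp
  exact hp (by rw [h0, mul_zero])

private lemma prkSet_mem_of_le {X : Matrix (Fin n) (Fin n) F} :
    ∀ {s : ℕ}, s ∈ prkSet X → ∀ l ≤ s, l ∈ prkSet X := by
  intro s
  induction s with
  | zero => intro h l hl; rwa [Nat.le_zero.mp hl]
  | succ s ih =>
    intro h l hl
    rcases Nat.lt_or_ge l (s + 1) with h' | h'
    · exact ih (prkSet_down h) l (Nat.lt_succ_iff.mp h')
    · rwa [le_antisymm hl h']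

private lemma prk_spec (X : Matrix (Fin n) (Fin n) F) : prk X ∈ prkSet X :=
  Nat.sSup_mem ⟨0, zero_mem_prkSet X⟩ (bddAbove_prkSet X)

private lemma le_prk_of_mem {X : Matrix (Fin n) (Fin n) F} {s : ℕ} (h : s ∈ prkSet X) :
    s ≤ prk X :=
  le_csSup (bddAbove_prkSet X) h

private lemma prk_le_of_forall {X : Matrix (Fin n) (Fin n) F} {s : ℕ}
    (h : s + 1 ∉ prkSet X) : prk X ≤ s := by
  refine csSup_le ⟨0, zero_mem_prkSet X⟩ fun l hl => ?_
  by_contra hls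
  exact h (prkSet_mem_of_le hl (s + 1) (Nat.succ_le_of_lt (Nat.lt_of_not_le hls)))

end Aux

theorem stmt_6 {n : ℕ} {F : Type*} [Field F] [Infinite F] (hn : 3 ≤ n) (hchar : (2 : F) ≠ 0)
    (k : ℕ) (hk1 : 1 ≤ k) (hk2 : k ≤ n)
    (A : Matrix (Fin n) (Fin n) F) (hA : prk A = k - 1)
    (f : MvPolynomial (Fin n × Fin n) F)
    (hf : MvPolynomial.eval (fun p => A p.1 p.2) f ≠ 0) :
    ∃ X : Matrix (Fin n) (Fin n) F,
      prk X = k ∧ MvPolynomial.eval (fun p => X p.1 p.2) f ≠ 0 := by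
  classical
  obtain ⟨m, rfl⟩ : ∃ m, k = m + 1 := ⟨k - 1, (Nat.succ_pred_eq_of_pos hk1).symm⟩
  simp only [Nat.add_sub_cancel] at hA
  -- every subpermanent of size > m vanishes
  have hAle : ∀ s : ℕ, s ∈ prkSet A → s ≤ m := fun s hs => hA ▸ le_prk_of_mem hs
  have hAnot : ∀ s : ℕ, m < s → s ∉ prkSet A := fun s hs h => absurd (hAle s h) (not_le.mpr hs)
  obtain ⟨r, c, hr, hc, hperm⟩ : m ∈ prkSet A := hA ▸ prk_spec A
  have hmn : m < n := Nat.lt_of_lt_of_le (Nat.lt_succ_self m) hk2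
  obtain ⟨i, hi⟩ : ∃ i : Fin n, i ∉ Set.range r := by
    by_contra h; push_neg at h
    have hsurj : Function.Surjective r := fun y => h y
    have := Fintype.card_le_of_surjective r hsurj
    simp only [Fintype.card_fin] at this; omega
  obtain ⟨j, hj⟩ : ∃ j : Fin n, j ∉ Set.range c := by
    by_contra h; push_neg at h
    have hsurj : Function.Surjective c := fun y => h y
    have := Fintype.card_le_of_surjective c hsurj
    simp only [Fintype.card_fin] at this; omega
  -- the perturbed matrix
  set Xt : F → Matrix (Fin n) (Fin n) F :=
    fun t => Matrix.of fun a b => A a b + if a = i ∧ b = j then t else 0 with hXt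
  -- upper bound: for every t, every (m+2)-subpermanent of Xt t vanishes
  have hupper : ∀ t : F, (m + 1) + 1 ∉ prkSet (Xt t) := by
    rintro t ⟨r', c', hr', hc', hp⟩
    by_cases hir : i ∈ Set.range r'
    · by_cases hjc : j ∈ Set.range c'
      · obtain ⟨i1, hi1⟩ := hir
        obtain ⟨j1, hj1⟩ := hjc
        set σ := Equiv.swap (0 : Fin (m + 1 + 1)) i1
        set τ := Equiv.swap (0 : Fin (m + 1 + 1)) j1
        have hps : ((Xt t).submatrix (r' ∘ σ) (c' ∘ τ)).permanent
            = ((Xt t).submatrix r' c').permanent := by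
          rw [← Matrix.submatrix_submatrix]
          exact permanent_submatrix_perm _ σ τ
        have hr'' : Function.Injective (r' ∘ σ) := hr'.comp σ.injective
        have hc'' : Function.Injective (c' ∘ τ) := hc'.comp τ.injective
        have hr0 : (r' ∘ σ) 0 = i := by simp [σ, Equiv.swap_apply_left, hi1]
        have hc0 : (c' ∘ τ) 0 = j := by simp [τ, Equiv.swap_apply_left, hj1]
        have heq : (Xt t).submatrix (r' ∘ σ) (c' ∘ τ) =
            Matrix.of fun a b => (A.submatrix (r' ∘ σ) (c' ∘ τ)) a b +
              if a = 0 ∧ b = 0 then t else 0 := by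
          ext a b
          simp only [hXt, Matrix.submatrix_apply, Matrix.of_apply]
          congr 1
          have : ((r' ∘ σ) a = i ∧ (c' ∘ τ) b = j) ↔ (a = 0 ∧ b = 0) := by
            rw [← hr0, ← hc0, hr''.eq_iff, hc''.eq_iff]
          simp only [this]
        rw [← hps, heq, permanent_perturb] at hp
        have h1 : (A.submatrix (r' ∘ σ) (c' ∘ τ)).permanent = 0 := by
          by_contra h
          exact hAnot (m + 1 + 1) (by omega) ⟨_, _, hr'', hc'', h⟩
        have h2 : ((A.submatrix (r' ∘ σ) (c' ∘ τ)).submatrix Fin.succ Fin.succ).permanent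
            = 0 := by
          by_contra h
          rw [Matrix.submatrix_submatrix] at h
          exact hAnot (m + 1) (by omega)
            ⟨_, _, hr''.comp (Fin.succ_injective _), hc''.comp (Fin.succ_injective _), h⟩
        rw [h1, h2, mul_zero, add_zero] at hp
        exact hp rfl
      · refine hAnot (m + 1 + 1) (by omega) ⟨r', c', hr', hc', ?_⟩
        have : (Xt t).submatrix r' c' = A.submatrix r' c' := by
          ext a b
          simp only [hXt, Matrix.submatrix_apply, Matrix.of_apply]
          rw [if_neg, add_zero]
          rintro ⟨-, hb⟩; exact hjc ⟨b, hb⟩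
        rwa [this] at hp
    · refine hAnot (m + 1 + 1) (by omega) ⟨r', c', hr', hc', ?_⟩
      have : (Xt t).submatrix r' c' = A.submatrix r' c' := by
        ext a b
        simp only [hXt, Matrix.submatrix_apply, Matrix.of_apply]
        rw [if_neg, add_zero]
        rintro ⟨ha, -⟩; exact hir ⟨a, ha⟩
      rwa [this] at hp
  -- lower bound witness
  set r' : Fin (m + 1) → Fin n := Fin.cons i r with hr'def
  set c' : Fin (m + 1) → Fin n := Fin.cons j c with hc'def
  have hr' : Function.Injective r' := Fin.cons_injective_iff.mpr ⟨hi, hr⟩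
  have hc' : Function.Injective c' := Fin.cons_injective_iff.mpr ⟨hj, hc⟩
  have hr'0 : r' 0 = i := Fin.cons_zero _ _
  have hc'0 : c' 0 = j := Fin.cons_zero _ _
  have hrs : r' ∘ Fin.succ = r := by funext a; simp [hr'def]
  have hcs : c' ∘ Fin.succ = c := by funext a; simp [hc'def]
  have hXsub : ∀ t : F, (Xt t).submatrix r' c' =
      Matrix.of fun a b => (A.submatrix r' c') a b + if a = 0 ∧ b = 0 then t else 0 := by
    intro t
    ext a b
    simp only [hXt, Matrix.submatrix_apply, Matrix.of_apply]
    congr 1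
    have : (r' a = i ∧ c' b = j) ↔ (a = 0 ∧ b = 0) := by
      rw [← hr'0, ← hc'0, hr'.eq_iff, hc'.eq_iff]
    simp only [this]
  have hXperm : ∀ t : F, ((Xt t).submatrix r' c').permanent =
      (A.submatrix r' c').permanent + t * (A.submatrix r c).permanent := by
    intro t
    rw [hXsub t, permanent_perturb, Matrix.submatrix_submatrix, hrs, hcs]
  set P0 := (A.submatrix r' c').permanent with hP0
  set b := (A.submatrix r c).permanent with hb
  -- the polynomial in t corresponding to f
  set q : Polynomial F := MvPolynomial.eval₂ (Polynomial.C : F →+* Polynomial F)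
    (fun p => Polynomial.C (A p.1 p.2) +
      Polynomial.C (if p.1 = i ∧ p.2 = j then (1 : F) else 0) * Polynomial.X) f with hq
  have hqeval : ∀ t : F, Polynomial.eval t q =
      MvPolynomial.eval (fun p => (Xt t) p.1 p.2) f := by
    intro t
    have hid : (Polynomial.evalRingHom t).comp (Polynomial.C : F →+* Polynomial F)
        = RingHom.id F := by
      ext x; simp
    have hcomp : (⇑(Polynomial.evalRingHom t) ∘ fun p : Fin n × Fin n =>
        Polynomial.C (A p.1 p.2) +
          Polynomial.C (if p.1 = i ∧ p.2 = j then (1 : F) else 0) * Polynomial.X)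
        = fun p => (Xt t) p.1 p.2 := by
      funext p
      simp only [Function.comp_apply, map_add, _root_.map_mul, Polynomial.coe_evalRingHom,
        Polynomial.eval_C, Polynomial.eval_X, hXt, Matrix.of_apply]
      by_cases h : p.1 = i ∧ p.2 = j <;> simp [h]
    rw [hq, show (Polynomial.eval t : Polynomial F → F) = ⇑(Polynomial.evalRingHom t) from rfl,
      MvPolynomial.eval₂_comp_left (Polynomial.evalRingHom t), hid, hcomp,
      MvPolynomial.eval₂_id]
  have hq0 : q ≠ 0 := by
    intro h
    apply hf
    have := hqeval 0
    rw [h, Polynomial.eval_zero] at this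
    have hX0 : (fun p : Fin n × Fin n => (Xt 0) p.1 p.2) = fun p => A p.1 p.2 := by
      funext p; simp [hXt]
    rw [hX0] at this
    exact this.symm
  set ℓ : Polynomial F := Polynomial.C P0 + Polynomial.C b * Polynomial.X with hℓ
  have hℓ0 : ℓ ≠ 0 := by
    intro h
    apply hperm
    have := congrArg (fun p => Polynomial.coeff p 1) h
    simpa [hℓ] using this
  obtain ⟨t, ht⟩ := Infinite.exists_notMem_finset (q.roots.toFinset ∪ ℓ.roots.toFinset)
  simp only [Finset.mem_union, Multiset.mem_toFinset, not_or] at ht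
  obtain ⟨htq, htℓ⟩ := ht
  have hft : MvPolynomial.eval (fun p => (Xt t) p.1 p.2) f ≠ 0 := by
    rw [← hqeval]
    intro h
    exact htq ((Polynomial.mem_roots hq0).mpr h)
  have hlt : P0 + t * b ≠ 0 := by
    intro h
    apply htℓ
    rw [Polynomial.mem_roots hℓ0]
    simp only [hℓ, Polynomial.IsRoot, Polynomial.eval_add, Polynomial.eval_C,
      Polynomial.eval_mul, Polynomial.eval_X]
    rw [mul_comm]; exact h
  refine ⟨Xt t, ?_, hft⟩
  refine le_antisymm (prk_le_of_forall (hupper t)) (le_prk_of_mem ?_)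
  exact ⟨r', c', hr', hc', by rw [hXperm t]; exact hlt⟩
end

section
/- Let 1 ≤ k ≤ n-1 with (k, n) ≠ (2, 4). Let M be the set of subspaces of Mat_n(F) consisting of all V_S^row and all V_S^col, where S ranges over k-element subsets of {1,...,n}, and let Φ : M → M be a bijection satisfying dim(Φ(U) ∩ Φ(V)) = dim(U ∩ V) for all U, V ∈ M. Then either Φ maps the set {V_S^row : |S| = k} onto itself and the set {V_S^col : |S| = k} onto itself, or Φ maps {V_S^row : |S| = k} onto {V_S^col : |S| = k} and {V_S^col : |S| = k} onto {V_S^row : |S| = k}. -/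
open Matrix

/-- `Vrow F S` : the subspace of matrices all of whose nonzero entries lie in the
rows indexed by `S`. -/
def Vrow {n : ℕ} (F : Type*) [Field F] (S : Finset (Fin n)) :
    Submodule F (Matrix (Fin n) (Fin n) F) where
  carrier := {A | ∀ i j, i ∉ S → A i j = 0}
  add_mem' := by intro a b ha hb i j h; simp [Matrix.add_apply, ha i j h, hb i j h]
  zero_mem' := fun i j _ => rfl
  smul_mem' := by intro c a ha i j h; simp [Matrix.smul_apply, ha i j h]

/-- `Vcol F S` : the subspace of matrices all of whose nonzero entries lie in the
columns indexed by `S`. -/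
def Vcol {n : ℕ} (F : Type*) [Field F] (S : Finset (Fin n)) :
    Submodule F (Matrix (Fin n) (Fin n) F) where
  carrier := {A | ∀ i j, j ∉ S → A i j = 0}
  add_mem' := by intro a b ha hb i j h; simp [Matrix.add_apply, ha i j h, hb i j h]
  zero_mem' := fun i j _ => rfl
  smul_mem' := by intro c a ha i j h; simp [Matrix.smul_apply, ha i j h]

section Aux
variable {n : ℕ} {F : Type*} [Field F]

lemma mem_Vrow' {S : Finset (Fin n)} {A : Matrix (Fin n) (Fin n) F} :
    A ∈ Vrow F S ↔ ∀ i j, i ∉ S → A i j = 0 := Iff.rfl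

lemma mem_Vcol' {S : Finset (Fin n)} {A : Matrix (Fin n) (Fin n) F} :
    A ∈ Vcol F S ↔ ∀ i j, j ∉ S → A i j = 0 := Iff.rfl

lemma finrank_supported (P : Finset (Fin n × Fin n))
    (W : Submodule F (Matrix (Fin n) (Fin n) F))
    (hW : ∀ A, A ∈ W ↔ ∀ i j, (i, j) ∉ P → A i j = 0) :
    Module.finrank F W = P.card := by
  classical
  let e : W ≃ₗ[F] (↑P → F) :=
    { toFun := fun A p => (A : Matrix (Fin n) (Fin n) F) p.1.1 p.1.2
      map_add' := fun A B => rfl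
      map_smul' := fun c A => rfl
      invFun := fun f =>
        ⟨Matrix.of (fun i j => if h : (i, j) ∈ P then f ⟨(i, j), h⟩ else 0), by
          rw [hW]; intro i j hij; simp [hij]⟩
      left_inv := by
        rintro ⟨A, hA⟩
        apply Subtype.ext
        ext i j
        by_cases h : (i, j) ∈ P
        · simp [h]
        · simp [h, (hW A).1 hA i j h]
      right_inv := by
        rintro f
        funext p
        obtain ⟨⟨i, j⟩, hp⟩ := p
        simp [hp] }
  rw [e.finrank_eq, Module.finrank_fintype_fun_eq_card, Fintype.card_coe]

lemma finrank_rr (S T : Finset (Fin n)) :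
    Module.finrank F ((Vrow F S ⊓ Vrow F T : Submodule F (Matrix (Fin n) (Fin n) F)))
      = (S ∩ T).card * n := by
  classical
  rw [show (S ∩ T).card * n = ((S ∩ T) ×ˢ (Finset.univ : Finset (Fin n))).card by
    simp [Finset.card_product]]
  apply finrank_supported
  intro A
  rw [Submodule.mem_inf, mem_Vrow', mem_Vrow']
  constructor
  · rintro ⟨h1, h2⟩ i j hij
    simp only [Finset.mem_product, Finset.mem_inter, Finset.mem_univ, and_true] at hij
    by_cases hS : i ∈ S
    · exact h2 i j (fun hT => hij ⟨hS, hT⟩)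
    · exact h1 i j hS
  · intro h
    constructor
    · intro i j hS
      exact h i j (by simp [Finset.mem_product, Finset.mem_inter]; tauto)
    · intro i j hT
      exact h i j (by simp [Finset.mem_product, Finset.mem_inter]; tauto)

lemma finrank_cc (S T : Finset (Fin n)) :
    Module.finrank F ((Vcol F S ⊓ Vcol F T : Submodule F (Matrix (Fin n) (Fin n) F)))
      = n * (S ∩ T).card := by
  classical
  rw [show n * (S ∩ T).card = ((Finset.univ : Finset (Fin n)) ×ˢ (S ∩ T)).card by
    simp [Finset.card_product]]
  apply finrank_supported
  intro A
  rw [Submodule.mem_inf, mem_Vcol', mem_Vcol']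
  constructor
  · rintro ⟨h1, h2⟩ i j hij
    simp only [Finset.mem_product, Finset.mem_inter, Finset.mem_univ, true_and] at hij
    by_cases hS : j ∈ S
    · exact h2 i j (fun hT => hij ⟨hS, hT⟩)
    · exact h1 i j hS
  · intro h
    constructor
    · intro i j hS
      exact h i j (by simp [Finset.mem_product, Finset.mem_inter]; tauto)
    · intro i j hT
      exact h i j (by simp [Finset.mem_product, Finset.mem_inter]; tauto)

lemma finrank_rc (S T : Finset (Fin n)) :
    Module.finrank F ((Vrow F S ⊓ Vcol F T : Submodule F (Matrix (Fin n) (Fin n) F)))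
      = S.card * T.card := by
  classical
  rw [show S.card * T.card = (S ×ˢ T).card by simp [Finset.card_product]]
  apply finrank_supported
  intro A
  rw [Submodule.mem_inf, mem_Vrow', mem_Vcol']
  constructor
  · rintro ⟨h1, h2⟩ i j hij
    simp only [Finset.mem_product] at hij
    by_cases hS : i ∈ S
    · exact h2 i j (fun hT => hij ⟨hS, hT⟩)
    · exact h1 i j hS
  · intro h
    constructor
    · intro i j hS
      exact h i j (by simp [Finset.mem_product]; tauto)
    · intro i j hT
      exact h i j (by simp [Finset.mem_product]; tauto)

lemma finrank_cr (S T : Finset (Fin n)) :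
    Module.finrank F ((Vcol F S ⊓ Vrow F T : Submodule F (Matrix (Fin n) (Fin n) F)))
      = T.card * S.card := by
  rw [inf_comm]; exact finrank_rc T S

lemma Vrow_ne_Vcol {k : ℕ} (hk1 : 1 ≤ k) (hkn : k < n) {S T : Finset (Fin n)}
    (hS : S.card = k) (hT : T.card = k) : Vrow F S ≠ Vcol F T := by
  classical
  obtain ⟨i, hi⟩ := Finset.card_pos.mp (by omega : 0 < S.card)
  have hTne : ∃ j, j ∉ T := by
    by_contra h
    push_neg at h
    have : T = Finset.univ := Finset.eq_univ_iff_forall.mpr h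
    rw [this, Finset.card_univ, Fintype.card_fin] at hT
    omega
  obtain ⟨j, hj⟩ := hTne
  intro hEq
  have h1 : (Matrix.of fun i' j' => if i' = i ∧ j' = j then (1 : F) else 0) ∈ Vrow F S := by
    intro i' j' hi'
    simp only [Matrix.of_apply]
    split
    · next h => exact absurd (h.1 ▸ hi) hi'
    · rfl
  rw [hEq] at h1
  have := h1 i j hj
  simp at this

lemma johnson_chain {α : Type*} [DecidableEq α] (k : ℕ) :
    ∀ m (S T : Finset α), (S \ T).card = m → S.card = k → T.card = k →
    Relation.ReflTransGen
      (fun A B : Finset α => A.card = k ∧ B.card = k ∧ (A ∩ B).card = k - 1) S T := by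
  intro m
  induction m with
  | zero =>
    intro S T hm hS hT
    have hsub : S ⊆ T := by
      rwa [Finset.card_eq_zero, Finset.sdiff_eq_empty_iff_subset] at hm
    have : S = T := Finset.eq_of_subset_of_card_le hsub (by omega)
    rw [this]
  | succ m ih =>
    intro S T hm hS hT
    obtain ⟨s, hs⟩ := Finset.card_pos.mp (by omega : 0 < (S \ T).card)
    rw [Finset.mem_sdiff] at hs
    have hTS : 0 < (T \ S).card := by
      have h1 := Finset.card_sdiff_add_card_inter S T
      have h2 := Finset.card_sdiff_add_card_inter T S
      rw [Finset.inter_comm T S] at h2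
      omega
    obtain ⟨t, ht⟩ := Finset.card_pos.mp hTS
    rw [Finset.mem_sdiff] at ht
    set S' := insert t (S.erase s) with hS'def
    have htne : t ∉ S.erase s := fun h => ht.2 (Finset.mem_of_mem_erase h)
    have hS' : S'.card = k := by
      rw [hS'def, Finset.card_insert_of_notMem htne, Finset.card_erase_of_mem hs.1]
      have : 0 < S.card := Finset.card_pos.mpr ⟨s, hs.1⟩
      omega
    have hinter : (S ∩ S').card = k - 1 := by
      have : S ∩ S' = S.erase s := by
        ext x
        simp only [hS'def, Finset.mem_inter, Finset.mem_insert, Finset.mem_erase]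
        constructor
        · rintro ⟨hxS, hx⟩
          rcases hx with rfl | hx
          · exact absurd hxS ht.2
          · exact hx
        · rintro ⟨hxs, hxS⟩
          exact ⟨hxS, Or.inr ⟨hxs, hxS⟩⟩
      rw [this, Finset.card_erase_of_mem hs.1, hS]
    have hsd : (S' \ T).card = m := by
      have : S' \ T = (S \ T).erase s := by
        ext x
        simp only [hS'def, Finset.mem_sdiff, Finset.mem_insert, Finset.mem_erase]
        constructor
        · rintro ⟨rfl | ⟨hxs, hxS⟩, hxT⟩
          · exact absurd ht.1 hxT
          · exact ⟨hxs, hxS, hxT⟩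
        · rintro ⟨hxs, hxS, hxT⟩
          exact ⟨Or.inr ⟨hxs, hxS⟩, hxT⟩
      rw [this, Finset.card_erase_of_mem (Finset.mem_sdiff.mpr hs), hm]
      omega
    exact Relation.ReflTransGen.head ⟨hS, hS', hinter⟩ (ih S' T hsd hS' hT)

lemma arith_key {n k : ℕ} (hn : 3 ≤ n) (hk1 : 1 ≤ k) (hk2 : k ≤ n - 1)
    (hkn : ¬(k = 2 ∧ n = 4)) : n * (k - 1) ≠ k * k := by
  intro h
  obtain ⟨a, rfl⟩ : ∃ a, k = a + 1 := ⟨k - 1, by omega⟩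
  obtain ⟨m, rfl⟩ : ∃ m, n = a + 2 + m := ⟨n - a - 2, by omega⟩
  simp only [Nat.add_sub_cancel] at h
  have hma : m * a = 1 := by nlinarith
  have ha1 : a = 1 := Nat.dvd_one.mp ⟨m, by rw [← hma]; ring⟩
  subst ha1
  simp at hma
  omega

end Aux

theorem stmt_13 {n : ℕ} {F : Type*} [Field F] (hn : 3 ≤ n) (hchar : (2 : F) ≠ 0)
    (k : ℕ) (hk1 : 1 ≤ k) (hk2 : k ≤ n - 1) (hkn : ¬(k = 2 ∧ n = 4))
    (Φ : Submodule F (Matrix (Fin n) (Fin n) F) → Submodule F (Matrix (Fin n) (Fin n) F))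
    (hΦ : Set.BijOn Φ
      ({V | ∃ S : Finset (Fin n), S.card = k ∧ V = Vrow F S} ∪
       {V | ∃ S : Finset (Fin n), S.card = k ∧ V = Vcol F S})
      ({V | ∃ S : Finset (Fin n), S.card = k ∧ V = Vrow F S} ∪
       {V | ∃ S : Finset (Fin n), S.card = k ∧ V = Vcol F S}))
    (hw : ∀ U ∈ ({V | ∃ S : Finset (Fin n), S.card = k ∧ V = Vrow F S} ∪
            {V | ∃ S : Finset (Fin n), S.card = k ∧ V = Vcol F S} :
            Set (Submodule F (Matrix (Fin n) (Fin n) F))),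
          ∀ V ∈ ({V | ∃ S : Finset (Fin n), S.card = k ∧ V = Vrow F S} ∪
            {V | ∃ S : Finset (Fin n), S.card = k ∧ V = Vcol F S} :
            Set (Submodule F (Matrix (Fin n) (Fin n) F))),
          Module.finrank F (Φ U ⊓ Φ V : Submodule F (Matrix (Fin n) (Fin n) F))
            = Module.finrank F (U ⊓ V : Submodule F (Matrix (Fin n) (Fin n) F))) :
    (Φ '' {V | ∃ S : Finset (Fin n), S.card = k ∧ V = Vrow F S}
        = {V | ∃ S : Finset (Fin n), S.card = k ∧ V = Vrow F S} ∧
     Φ '' {V | ∃ S : Finset (Fin n), S.card = k ∧ V = Vcol F S}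
        = {V | ∃ S : Finset (Fin n), S.card = k ∧ V = Vcol F S}) ∨
    (Φ '' {V | ∃ S : Finset (Fin n), S.card = k ∧ V = Vrow F S}
        = {V | ∃ S : Finset (Fin n), S.card = k ∧ V = Vcol F S} ∧
     Φ '' {V | ∃ S : Finset (Fin n), S.card = k ∧ V = Vcol F S}
        = {V | ∃ S : Finset (Fin n), S.card = k ∧ V = Vrow F S}) := by
  classical
  set R : Set (Submodule F (Matrix (Fin n) (Fin n) F)) :=
    {V | ∃ S : Finset (Fin n), S.card = k ∧ V = Vrow F S} with hRdef
  set C : Set (Submodule F (Matrix (Fin n) (Fin n) F)) :=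
    {V | ∃ S : Finset (Fin n), S.card = k ∧ V = Vcol F S} with hCdef
  have hkn' : k < n := by omega
  have harith : n * (k - 1) ≠ k * k := arith_key hn hk1 hk2 hkn
  have hrowR : ∀ S : Finset (Fin n), S.card = k → Vrow F S ∈ R := fun S hS => ⟨S, hS, rfl⟩
  have hcolC : ∀ S : Finset (Fin n), S.card = k → Vcol F S ∈ C := fun S hS => ⟨S, hS, rfl⟩
  have hdisj : ∀ V, V ∈ R → V ∈ C → False := by
    rintro V ⟨S, hS, rfl⟩ ⟨T, hT, hVT⟩
    exact Vrow_ne_Vcol hk1 hkn' hS hT hVT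
  have sametype : ∀ U ∈ R ∪ C, ∀ V ∈ R ∪ C,
      Module.finrank F ↥(U ⊓ V) = n * (k - 1) → (U ∈ R ↔ V ∈ R) := by
    rintro U hU V hV hdim
    rcases hU with ⟨S, hS, rfl⟩ | ⟨S, hS, rfl⟩ <;> rcases hV with ⟨T, hT, rfl⟩ | ⟨T, hT, rfl⟩
    · exact iff_of_true (hrowR S hS) (hrowR T hT)
    · exact absurd hdim (by rw [finrank_rc, hS, hT]; exact fun h => harith h.symm)
    · exact absurd hdim (by rw [finrank_cr, hT, hS]; exact fun h => harith h.symm)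
    · exact iff_of_false (fun h => hdisj _ h (hcolC S hS)) (fun h => hdisj _ h (hcolC T hT))
  have hM : Set.MapsTo Φ (R ∪ C) (R ∪ C) := hΦ.mapsTo
  have rowsame : ∀ S T : Finset (Fin n), S.card = k → T.card = k →
      (Φ (Vrow F S) ∈ R ↔ Φ (Vrow F T) ∈ R) := by
    intro S T hS hT
    have chain := johnson_chain k ((S \ T).card) S T rfl hS hT
    clear hT
    induction chain with
    | refl => exact Iff.rfl
    | @tail b c hab hstep ih =>
      obtain ⟨hb, hc, hbc⟩ := hstep
      have h1 : Module.finrank F ↥(Vrow F b ⊓ Vrow F c) = n * (k - 1) := by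
        rw [finrank_rr, hbc, Nat.mul_comm]
      have h2 := hw _ (Or.inl (hrowR _ hb)) _ (Or.inl (hrowR _ hc))
      rw [h1] at h2
      exact ih.trans (sametype _ (hM (Or.inl (hrowR _ hb))) _ (hM (Or.inl (hrowR _ hc))) h2)
  have colsame : ∀ S T : Finset (Fin n), S.card = k → T.card = k →
      (Φ (Vcol F S) ∈ R ↔ Φ (Vcol F T) ∈ R) := by
    intro S T hS hT
    have chain := johnson_chain k ((S \ T).card) S T rfl hS hT
    clear hT
    induction chain with
    | refl => exact Iff.rfl
    | @tail b c hab hstep ih =>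
      obtain ⟨hb, hc, hbc⟩ := hstep
      have h1 : Module.finrank F ↥(Vcol F b ⊓ Vcol F c) = n * (k - 1) := by
        rw [finrank_cc, hbc]
      have h2 := hw _ (Or.inr (hcolC _ hb)) _ (Or.inr (hcolC _ hc))
      rw [h1] at h2
      exact ih.trans (sametype _ (hM (Or.inr (hcolC _ hb))) _ (hM (Or.inr (hcolC _ hc))) h2)
  have hkle : k ≤ (Finset.univ : Finset (Fin n)).card := by
    rw [Finset.card_univ, Fintype.card_fin]; omega
  obtain ⟨S₀, -, hS₀⟩ := Finset.exists_subset_card_eq hkle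
  rcases hM (Or.inl (hrowR S₀ hS₀)) with hr | hr
  · -- rows go to rows
    have hallr : ∀ T : Finset (Fin n), T.card = k → Φ (Vrow F T) ∈ R :=
      fun T hT => (rowsame S₀ T hS₀ hT).mp hr
    have hc₀ : Φ (Vcol F S₀) ∈ C := by
      rcases hM (Or.inr (hcolC S₀ hS₀)) with hc | hc
      · exfalso
        obtain ⟨U, hU, hUeq⟩ := hΦ.surjOn (Or.inr (hcolC S₀ hS₀))
        have hUR : Φ U ∈ R := by
          rcases hU with ⟨P, hP, rfl⟩ | ⟨P, hP, rfl⟩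
          · exact hallr P hP
          · exact (colsame P S₀ hP hS₀).mpr hc
        rw [hUeq] at hUR
        exact hdisj _ hUR (hcolC S₀ hS₀)
      · exact hc
    have hallc : ∀ T : Finset (Fin n), T.card = k → Φ (Vcol F T) ∈ C := by
      intro T hT
      rcases hM (Or.inr (hcolC T hT)) with h | h
      · exact absurd ((colsame T S₀ hT hS₀).mp h) (fun hx => hdisj _ hx hc₀)
      · exact h
    left
    constructor
    · apply subset_antisymm
      · rintro _ ⟨U, ⟨P, hP, rfl⟩, rfl⟩
        exact hallr P hP
      · rintro V hV
        obtain ⟨U, hU, hUeq⟩ := hΦ.surjOn (Or.inl hV)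
        rcases hU with hUr | ⟨P, hP, rfl⟩
        · exact ⟨U, hUr, hUeq⟩
        · exact absurd (hUeq ▸ hallc P hP) (fun hx => hdisj V hV hx)
    · apply subset_antisymm
      · rintro _ ⟨U, ⟨P, hP, rfl⟩, rfl⟩
        exact hallc P hP
      · rintro V hV
        obtain ⟨U, hU, hUeq⟩ := hΦ.surjOn (Or.inr hV)
        rcases hU with ⟨P, hP, rfl⟩ | hUc
        · exact absurd hV (fun hx => hdisj V (hUeq ▸ hallr P hP) hx)
        · exact ⟨U, hUc, hUeq⟩
  · -- rows go to cols
    have hallr : ∀ T : Finset (Fin n), T.card = k → Φ (Vrow F T) ∈ C := by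
      intro T hT
      rcases hM (Or.inl (hrowR T hT)) with h | h
      · exact absurd hr (fun hx => hdisj _ ((rowsame T S₀ hT hS₀).mp h) hx)
      · exact h
    have hc₀ : Φ (Vcol F S₀) ∈ R := by
      rcases hM (Or.inr (hcolC S₀ hS₀)) with hc | hc
      · exact hc
      · exfalso
        obtain ⟨U, hU, hUeq⟩ := hΦ.surjOn (Or.inl (hrowR S₀ hS₀))
        have hUC : Φ U ∈ C := by
          rcases hU with ⟨P, hP, rfl⟩ | ⟨P, hP, rfl⟩
          · exact hallr P hP
          · rcases hM (Or.inr (hcolC P hP)) with h | h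
            · exact absurd hc (fun hx => hdisj _ ((colsame P S₀ hP hS₀).mp h) hx)
            · exact h
        rw [hUeq] at hUC
        exact hdisj _ (hrowR S₀ hS₀) hUC
    have hallc : ∀ T : Finset (Fin n), T.card = k → Φ (Vcol F T) ∈ R :=
      fun T hT => (colsame S₀ T hS₀ hT).mp hc₀
    right
    constructor
    · apply subset_antisymm
      · rintro _ ⟨U, ⟨P, hP, rfl⟩, rfl⟩
        exact hallr P hP
      · rintro V hV
        obtain ⟨U, hU, hUeq⟩ := hΦ.surjOn (Or.inr hV)
        rcases hU with hUr | ⟨P, hP, rfl⟩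
        · exact ⟨U, hUr, hUeq⟩
        · exact absurd (hUeq ▸ hallc P hP) (fun hx => hdisj V hx hV)
    · apply subset_antisymm
      · rintro _ ⟨U, ⟨P, hP, rfl⟩, rfl⟩
        exact hallc P hP
      · rintro V hV
        obtain ⟨U, hU, hUeq⟩ := hΦ.surjOn (Or.inl hV)
        rcases hU with ⟨P, hP, rfl⟩ | hUc
        · exact absurd hV (fun hx => hdisj V hx (hUeq ▸ hallr P hP))
        · exact ⟨U, hUc, hUeq⟩
end

section
/- Let 1 ≤ k ≤ n-1 and let C = (c_{ij}) ∈ Mat_n(F) be a matrix all of whose entries are nonzero such that C ∘ A ∈ Λ^{≤k} for every A ∈ Λ^{≤k}, where ∘ denotes the Hadamard (entrywise) product. Then there exist nonzero elements d_{1,1}, ..., d_{1,n}, d_{2,1}, ..., d_{2,n} ∈ F such that c_{ij} = d_{1,i} · d_{2,j} for all i, j; in particular C has rank 1. -/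
/-
Fix two rows `i₁ ≠ i₂` and two columns `j₁ ≠ j₂`. Place, on `k + 1` rows starting with `i₁, i₂`
and `k + 1` columns starting with `j₁, j₂`, the identity matrix whose leading `2 × 2` block is
`[[1, 1], [1, -1]]`, and zeros elsewhere. A `(k + 1)`-square submatrix of this matrix `A` with no
zero row or column is a reordering of that block, whose permanent is `1 · (-1) + 1 · 1 = 0`, so
`prk A ≤ k`. The same block of `C ∘ A` has permanent
`(c_{i₁j₂} c_{i₂j₁} - c_{i₁j₁} c_{i₂j₂}) · ∏ (diagonal entries of C)`, and `prk (C ∘ A) ≤ k` forces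
it to vanish. Hence all `2 × 2` minors of `C` vanish, and a matrix with nonzero entries and
vanishing `2 × 2` minors is `d₁ d₂ᵀ`.
-/

open Matrix

open Function Finset

theorem Equiv.Perm.exists_apply_eq_and_apply_eq {α : Type*} [DecidableEq α] {a b c d : α}
    (hab : a ≠ b) (hcd : c ≠ d) : ∃ σ : Equiv.Perm α, σ a = c ∧ σ b = d := by
  have hc : c ≠ Equiv.swap a c b := by
    simpa only [Equiv.swap_apply_left] using (Equiv.swap a c).injective.ne hab
  exact ⟨(Equiv.swap a c).trans (Equiv.swap (Equiv.swap a c b) d),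
    by simp [Equiv.swap_apply_of_ne_of_ne hc hcd], by simp⟩

namespace Matrix

section Permanent

variable {ι κ R : Type*} [Fintype ι] [Fintype κ] [DecidableEq ι] [DecidableEq κ]

theorem permanent_submatrix_equiv [CommSemiring R] (M : Matrix ι ι R) (e e' : κ ≃ ι) :
    (M.submatrix e e').permanent = M.permanent := by
  have : M.submatrix e e' = (M.submatrix (e'.symm.trans e) id).submatrix e' e' := by
    ext; simp
  rw [this, ← permanent_permute_cols (e'.symm.trans e) M]
  simp only [permanent]
  refine Fintype.sum_equiv (Equiv.permCongr e') _ _ fun σ => ?_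
  exact Fintype.prod_equiv e' _ _ fun i => by simp [Equiv.permCongr_apply]

theorem permanent_eq_zero_of_col_eq_zero [CommSemiring R] (M : Matrix ι ι R) (j : ι)
    (h : ∀ i, M i j = 0) : M.permanent = 0 :=
  sum_eq_zero fun _ _ => prod_eq_zero (mem_univ j) (h _)

theorem permanent_eq_zero_of_row_eq_zero [CommSemiring R] (M : Matrix ι ι R) (i : ι)
    (h : ∀ j, M i j = 0) : M.permanent = 0 := by
  rw [← permanent_transpose]
  exact permanent_eq_zero_of_col_eq_zero _ i h

theorem permanent_eq_of_offDiag_mem_pair [CommSemiring R] (E : Matrix ι ι R) {a b : ι}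
    (hab : a ≠ b) (hE : ∀ i j, i ≠ j → E i j ≠ 0 → (i = a ∨ i = b) ∧ (j = a ∨ j = b)) :
    E.permanent = (E a a * E b b + E a b * E b a) * ∏ i ∈ {a, b}ᶜ, E i i := by
  have hsupp : ∀ σ : Equiv.Perm ι, ∏ j, E (σ j) j ≠ 0 → σ = 1 ∨ σ = Equiv.swap a b := by
    intro σ hσ
    have h : ∀ j, σ j ≠ j → (σ j = a ∨ σ j = b) ∧ (j = a ∨ j = b) := fun j hj =>
      hE _ _ hj fun h0 => hσ (prod_eq_zero (mem_univ j) h0)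
    by_cases ha : σ a = a
    · left
      ext j
      rw [Equiv.Perm.one_apply]
      grind [Equiv.apply_eq_iff_eq]
    · right
      ext j
      grind [Equiv.apply_eq_iff_eq]
  have hne : (1 : Equiv.Perm ι) ≠ Equiv.swap a b := fun h => hab (by
    simpa using congrArg (· a) h)
  rw [permanent, ← sum_subset (subset_univ {1, Equiv.swap a b}) fun σ _ hσ => ?_,
    sum_pair hne, ← prod_mul_prod_compl {a, b}, ← prod_mul_prod_compl {a, b}]
  · simp only [prod_pair hab, Equiv.Perm.one_apply, Equiv.swap_apply_left, Equiv.swap_apply_right]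
    rw [prod_congr rfl fun i hi => ?_]
    · ring
    · simp only [mem_compl, mem_insert, mem_singleton, not_or] at hi
      rw [Equiv.swap_apply_of_ne_of_ne hi.1 hi.2]
  · by_contra h
    simp only [mem_insert, mem_singleton, not_or] at hσ
    exact (hsupp σ h).elim hσ.1 hσ.2

end Permanent

section PairBlock

variable {ι R : Type*} [Fintype ι] [DecidableEq ι] [CommRing R]

def pairBlock (a b : ι) : Matrix ι ι R :=
  of fun i j => if i = j then (if i = b then -1 else 1)
    else if (i = a ∧ j = b) ∨ (i = b ∧ j = a) then 1 else 0

theorem permanent_hadamard_pairBlock (M : Matrix ι ι R) {a b : ι} (hab : a ≠ b) :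
    (M ⊙ pairBlock a b).permanent = (M a b * M b a - M a a * M b b) * ∏ i ∈ {a, b}ᶜ, M i i := by
  rw [permanent_eq_of_offDiag_mem_pair _ hab fun i j hij h => ?_]
  · rw [prod_congr rfl fun i hi => ?_]
    · simp [pairBlock, hab, hab.symm]
      ring
    · simp only [mem_compl, mem_insert, mem_singleton, not_or] at hi
      simp [pairBlock, hi.2]
  · simp only [hadamard_apply, pairBlock, of_apply, if_neg hij] at h
    grind

theorem permanent_pairBlock {a b : ι} (hab : a ≠ b) :
    (pairBlock a b : Matrix ι ι R).permanent = 0 := by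
  have : (of fun _ _ => 1 : Matrix ι ι R) ⊙ pairBlock a b = pairBlock a b := by
    ext; simp
  rw [← this, permanent_hadamard_pairBlock _ hab]
  simp

end PairBlock

section ExtendByZero

variable {ι κ α β R : Type*} [Zero R]

noncomputable def extendByZero (r : ι → α) (c : κ → β) (B : Matrix ι κ R) : Matrix α β R :=
  extend r (fun x => extend c (B x) 0) 0

variable {r : ι → α} {c : κ → β}

theorem submatrix_extendByZero (hr : Injective r) (hc : Injective c) (B : Matrix ι κ R) :
    (extendByZero r c B).submatrix r c = B := by
  ext x y
  rw [submatrix_apply, extendByZero, hr.extend_apply, hc.extend_apply]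

theorem mem_range_of_extendByZero_ne_zero (B : Matrix ι κ R) {i : α} {j : β}
    (h : extendByZero r c B i j ≠ 0) : i ∈ Set.range r ∧ j ∈ Set.range c := by
  classical
  refine ⟨?_, ?_⟩ <;> by_contra hn <;> apply h <;> rw [extendByZero]
  · rw [extend_apply' _ _ _ hn]
    rfl
  · rw [extend_def]
    split_ifs
    · exact extend_apply' _ _ _ hn
    · rfl

end ExtendByZero

end Matrix

section PermanentalRank

variable {n : ℕ} {F : Type*} [Field F]

theorem le_prk_of_permanent_ne_zero (A : Matrix (Fin n) (Fin n) F) {m : ℕ} (r c : Fin m → Fin n)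
    (hr : Injective r) (hc : Injective c) (hp : (A.submatrix r c).permanent ≠ 0) :
    m ≤ prk A := by
  refine le_csSup ⟨n, ?_⟩ ⟨r, c, hr, hc, hp⟩
  rintro m' ⟨r', -, hr', -⟩
  simpa using Fintype.card_le_of_injective r' hr'

theorem prk_le_of_support {ι : Type*} [Fintype ι] [DecidableEq ι] {k : ℕ}
    (A : Matrix (Fin n) (Fin n) F) (r₀ c₀ : ι → Fin n) (hcard : Fintype.card ι ≤ k + 1)
    (hA : ∀ i j, A i j ≠ 0 → i ∈ Set.range r₀ ∧ j ∈ Set.range c₀)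
    (h₀ : (A.submatrix r₀ c₀).permanent = 0) : prk A ≤ k := by
  refine csSup_le' ?_
  rintro m ⟨r, c, hr, hc, hp⟩
  by_contra! hkm
  have hrow : ∀ x, r x ∈ Set.range r₀ := fun x => by_contra fun hx =>
    hp (permanent_eq_zero_of_row_eq_zero _ x fun y => by_contra fun h => hx (hA _ _ h).1)
  have hcol : ∀ y, c y ∈ Set.range c₀ := fun y => by_contra fun hy =>
    hp (permanent_eq_zero_of_col_eq_zero _ y fun x => by_contra fun h => hy (hA _ _ h).2)
  choose e he using hrow
  choose e' he' using hcol
  have he_inj : Injective e := fun x y h => hr (by rw [← he, ← he, h])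
  have hcard' : Fintype.card (Fin m) = Fintype.card ι := by
    have := Fintype.card_le_of_injective e he_inj
    simp only [Fintype.card_fin] at this ⊢
    omega
  have he_bij : Bijective e := (Fintype.bijective_iff_injective_and_card e).2 ⟨he_inj, hcard'⟩
  have he'_bij : Bijective e' := (Fintype.bijective_iff_injective_and_card e').2
    ⟨fun x y h => hc (by rw [← he', ← he', h]), hcard'⟩
  have hsub : A.submatrix r c = (A.submatrix r₀ c₀).submatrix
      (Equiv.ofBijective e he_bij) (Equiv.ofBijective e' he'_bij) := by
    ext x y
    simp [he, he']
  exact hp (by rw [hsub, permanent_submatrix_equiv, h₀])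

theorem mul_eq_mul_of_hadamard_preserves_prk_le {k : ℕ} (hk : 1 ≤ k) (hkn : k + 1 ≤ n)
    (C : Matrix (Fin n) (Fin n) F) (hC : ∀ i j, C i j ≠ 0)
    (hpres : ∀ A : Matrix (Fin n) (Fin n) F, prk A ≤ k → prk (C ⊙ A) ≤ k) (i₁ i₂ j₁ j₂ : Fin n) :
    C i₁ j₁ * C i₂ j₂ = C i₁ j₂ * C i₂ j₁ := by
  rcases eq_or_ne i₁ i₂ with rfl | hi
  · ring
  rcases eq_or_ne j₁ j₂ with rfl | hj
  · ring
  let a : Fin (k + 1) := 0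
  let b : Fin (k + 1) := ⟨1, by omega⟩
  have hab : a ≠ b := by simp [a, b, Fin.ext_iff]
  have hab' : Fin.castLE hkn a ≠ Fin.castLE hkn b := (Fin.castLE_injective hkn).ne hab
  obtain ⟨σ, hσa, hσb⟩ := Equiv.Perm.exists_apply_eq_and_apply_eq hab' hi
  obtain ⟨π, hπa, hπb⟩ := Equiv.Perm.exists_apply_eq_and_apply_eq hab' hj
  set r : Fin (k + 1) → Fin n := σ ∘ Fin.castLE hkn
  set c : Fin (k + 1) → Fin n := π ∘ Fin.castLE hkn
  have hr : Injective r := σ.injective.comp (Fin.castLE_injective hkn)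
  have hc : Injective c := π.injective.comp (Fin.castLE_injective hkn)
  set A : Matrix (Fin n) (Fin n) F := extendByZero r c (pairBlock a b)
  have hA : prk A ≤ k := prk_le_of_support A r c (by simp)
    (fun i j => mem_range_of_extendByZero_ne_zero _)
    (by rw [submatrix_extendByZero hr hc, permanent_pairBlock hab])
  have hCA : ((C ⊙ A).submatrix r c).permanent =
      (C i₁ j₂ * C i₂ j₁ - C i₁ j₁ * C i₂ j₂) * ∏ x ∈ {a, b}ᶜ, C (r x) (c x) := by
    rw [submatrix_hadamard, submatrix_extendByZero hr hc, permanent_hadamard_pairBlock _ hab]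
    simp [r, c, hσa, hσb, hπa, hπb]
  by_contra hne
  have := le_prk_of_permanent_ne_zero _ r c hr hc (hCA ▸ mul_ne_zero
    (sub_ne_zero.2 (Ne.symm hne)) (prod_ne_zero_iff.2 fun x _ => hC _ _))
  have := hpres A hA
  omega

end PermanentalRank

namespace Matrix

variable {m n K : Type*} [Field K]

theorem eq_vecMulVec_of_mul_eq_mul (C : Matrix m n K) {i₀ : m} {j₀ : n} (h₀ : C i₀ j₀ ≠ 0)
    (h : ∀ i j, C i j * C i₀ j₀ = C i j₀ * C i₀ j) :
    C = vecMulVec (fun i => C i j₀) (fun j => C i₀ j / C i₀ j₀) := by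
  ext i j
  rw [vecMulVec_apply, mul_div_assoc', eq_div_iff h₀, h]

theorem one_le_rank_of_ne_zero [Fintype n] (C : Matrix m n K) {i : m} {j : n} (h : C i j ≠ 0) :
    1 ≤ C.rank := by
  have := rank_submatrix_le C (fun _ : Unit => i) (fun _ : Unit => j)
  rwa [rank_of_det_ne_zero (by simpa using h), Fintype.card_unit] at this

end Matrix

theorem stmt_17_general {n : ℕ} {F : Type*} [Field F]
    (k : ℕ) (hk1 : 1 ≤ k) (hk2 : k ≤ n - 1)
    (C : Matrix (Fin n) (Fin n) F) (hC : ∀ i j, C i j ≠ 0)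
    (hpres : ∀ A : Matrix (Fin n) (Fin n) F, prk A ≤ k → prk (C.hadamard A) ≤ k) :
    ∃ d1 d2 : Fin n → F,
      (∀ i, d1 i ≠ 0) ∧ (∀ j, d2 j ≠ 0) ∧ (∀ i j, C i j = d1 i * d2 j) ∧ C.rank = 1 := by
  let z : Fin n := ⟨0, by omega⟩
  have hfac := C.eq_vecMulVec_of_mul_eq_mul (hC z z) fun i j =>
    mul_eq_mul_of_hadamard_preserves_prk_le hk1 (by omega) C hC hpres i z j z
  refine ⟨_, _, fun i => hC i z, fun j => div_ne_zero (hC z j) (hC z z),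
    fun i j => congrFun (congrFun hfac i) j, ?_⟩
  exact le_antisymm (hfac ▸ rank_vecMulVec_le _ _) (C.one_le_rank_of_ne_zero (hC z z))

theorem stmt_17 {n : ℕ} {F : Type*} [Field F] (hn : 3 ≤ n) (hchar : (2 : F) ≠ 0)
    (k : ℕ) (hk1 : 1 ≤ k) (hk2 : k ≤ n - 1)
    (C : Matrix (Fin n) (Fin n) F) (hC : ∀ i j, C i j ≠ 0)
    (hpres : ∀ A : Matrix (Fin n) (Fin n) F, prk A ≤ k → prk (C.hadamard A) ≤ k) :
    ∃ d1 d2 : Fin n → F,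
      (∀ i, d1 i ≠ 0) ∧ (∀ j, d2 j ≠ 0) ∧ (∀ i j, C i j = d1 i * d2 j) ∧ C.rank = 1 :=
  stmt_17_general k hk1 hk2 C hC hpres
end
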